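/- arXiv:2202.03503 — 2 statements merged into one kernel-verified Lean document; each statement's English description precedes it below -/
import Mathlib

section
/- Let s > n/2 and 0 < T < ∞. There exists a constant C = C(n, s, T) > 0 such that for all 1 < α < 2 and all t ∈ [0, T], the quantity ∫_{ℝⁿ} |exp(-t|ξ|^α) - exp(-t|ξ|²)|² (1+|ξ|²)^{-s} dξ is at most C²·(2-α)². -/
/-!
Fix `r = ‖ξ‖` and differentiate `β ↦ exp (-t r^β)` on `[α, 2]`; the derivative has absolute
value `x e^{-x} |log r|` with `x = t r^β`. For `r ≤ 1` this is at most `T r |log r| ≤ T`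
(as `r^β ≤ r`), and for `r ≥ 1` at most `log r ≤ r^ε / ε` (as `x e^{-x} ≤ 1`). The mean value
theorem gives `|e^{-t r^α} - e^{-t r^2}| ≤ (2 - α) (T + ε⁻¹) (1 + r²)^{ε/2}`, and for
`ε = (s - n/2)/2` the square of this bound times `(1 + r²)^{-s}` is integrable on `ℝⁿ`.
-/

open MeasureTheory Real ENNReal Filter Set
noncomputable section

abbrev E (n : ℕ) := EuclideanSpace ℝ (Fin n)

namespace Real

lemma hasDerivAt_exp_neg_mul_const_rpow {r : ℝ} (hr : 0 < r) (t β : ℝ) :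
    HasDerivAt (fun β ↦ exp (-t * r ^ β)) (exp (-t * r ^ β) * (-t * (r ^ β * log r))) β :=
  ((hasStrictDerivAt_const_rpow hr β).hasDerivAt.const_mul (-t)).exp

lemma mul_rpow_mul_exp_neg_mul_abs_log_le {t T r β ε : ℝ} (ht : 0 ≤ t) (htT : t ≤ T)
    (hr : 0 < r) (hβ : 1 ≤ β) (hε : 0 < ε) :
    t * r ^ β * exp (-(t * r ^ β)) * |log r| ≤ T + ε⁻¹ * r ^ ε := by
  have hT : 0 ≤ T := ht.trans htT
  have hx : 0 ≤ t * r ^ β := by positivity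
  have hexp : exp (-(t * r ^ β)) ≤ 1 := exp_le_one_iff.2 (by linarith)
  rcases le_total r 1 with hr1 | hr1
  · have hrβ : r ^ β ≤ r := by
      simpa using rpow_le_rpow_of_exponent_ge hr hr1 hβ
    have hrlog : r * |log r| ≤ 1 := by
      simpa [abs_mul, abs_of_pos hr, mul_comm] using (abs_log_mul_self_lt r hr hr1).le
    calc t * r ^ β * exp (-(t * r ^ β)) * |log r| ≤ T * r * 1 * |log r| := by
          gcongr
      _ = T * (r * |log r|) := by ring
      _ ≤ T * 1 := by gcongr
      _ ≤ T + ε⁻¹ * r ^ ε := by linarith [show 0 ≤ ε⁻¹ * r ^ ε by positivity]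
  · calc t * r ^ β * exp (-(t * r ^ β)) * |log r| ≤ 1 * (r ^ ε / ε) := by
          rw [abs_of_nonneg (log_nonneg hr1)]
          have hmax : t * r ^ β * exp (-(t * r ^ β)) ≤ 1 :=
            (mul_exp_neg_le_exp_neg_one _).trans (exp_le_one_iff.2 (by norm_num))
          exact mul_le_mul hmax (log_le_rpow_div hr.le hε) (log_nonneg hr1) zero_le_one
      _ ≤ T + ε⁻¹ * r ^ ε := by rw [one_mul, div_eq_inv_mul]; linarith

lemma abs_exp_neg_mul_rpow_sub_le {t T r a b ε : ℝ} (ht : 0 ≤ t) (htT : t ≤ T) (hr : 0 ≤ r)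
    (ha : 1 ≤ a) (hab : a ≤ b) (hε : 0 < ε) :
    |exp (-t * r ^ a) - exp (-t * r ^ b)| ≤ (b - a) * (T + ε⁻¹ * r ^ ε) := by
  rcases hr.eq_or_lt with rfl | hr
  · rw [zero_rpow (by linarith), zero_rpow (by linarith), sub_self, abs_zero]
    have hT : 0 ≤ T := ht.trans htT
    exact mul_nonneg (sub_nonneg.2 hab) (by positivity)
  have hderiv : ∀ β ∈ Icc a b, ‖exp (-t * r ^ β) * (-t * (r ^ β * log r))‖ ≤ T + ε⁻¹ * r ^ ε := by
    intro β hβ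
    convert mul_rpow_mul_exp_neg_mul_abs_log_le ht htT hr (ha.trans hβ.1) hε using 1
    rw [norm_mul, norm_mul, norm_mul, norm_neg, norm_of_nonneg (exp_pos _).le,
      norm_of_nonneg ht, norm_of_nonneg (by positivity : 0 ≤ r ^ β), norm_eq_abs, neg_mul]
    ring
  have := (convex_Icc a b).norm_image_sub_le_of_norm_hasDerivWithin_le
    (fun β _ ↦ (hasDerivAt_exp_neg_mul_const_rpow hr t β).hasDerivWithinAt) hderiv
    (left_mem_Icc.2 hab) (right_mem_Icc.2 hab)
  rw [mul_comm (b - a)]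
  rwa [norm_eq_abs, norm_of_nonneg (sub_nonneg.2 hab), abs_sub_comm] at this

lemma add_inv_mul_rpow_le {T ε r : ℝ} (hT : 0 ≤ T) (hε : 0 < ε) (hr : 0 ≤ r) :
    T + ε⁻¹ * r ^ ε ≤ (T + ε⁻¹) * (1 + r ^ 2) ^ (ε / 2) := by
  have h1 : 1 ≤ (1 + r ^ 2) ^ (ε / 2) := one_le_rpow (by nlinarith) (by positivity)
  have h2 : r ^ ε ≤ (1 + r ^ 2) ^ (ε / 2) := by
    calc r ^ ε = (r ^ 2) ^ (ε / 2) := by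
          rw [← rpow_natCast, ← rpow_mul hr]; ring_nf
      _ ≤ (1 + r ^ 2) ^ (ε / 2) := by gcongr; linarith
  calc T + ε⁻¹ * r ^ ε ≤ T * (1 + r ^ 2) ^ (ε / 2) + ε⁻¹ * (1 + r ^ 2) ^ (ε / 2) := by
        gcongr; nlinarith
    _ = _ := by ring

lemma sq_abs_exp_neg_mul_rpow_sub_mul_le {t T r a b ε s : ℝ} (ht : 0 ≤ t) (htT : t ≤ T)
    (hr : 0 ≤ r) (ha : 1 ≤ a) (hab : a ≤ b) (hε : 0 < ε) :
    |exp (-t * r ^ a) - exp (-t * r ^ b)| ^ 2 * (1 + r ^ 2) ^ (-s) ≤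
      (b - a) ^ 2 * (T + ε⁻¹) ^ 2 * (1 + r ^ 2) ^ (ε - s) := by
  have hw : 0 < 1 + r ^ 2 := by positivity
  have hweight : ((1 + r ^ 2) ^ (ε / 2)) ^ 2 * (1 + r ^ 2) ^ (-s) = (1 + r ^ 2) ^ (ε - s) := by
    rw [← rpow_natCast, ← rpow_mul hw.le, ← rpow_add hw]
    ring_nf
  have hdiff := (abs_exp_neg_mul_rpow_sub_le ht htT hr ha hab hε).trans
    (mul_le_mul_of_nonneg_left (add_inv_mul_rpow_le (ht.trans htT) hε hr) (sub_nonneg.2 hab))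
  calc |exp (-t * r ^ a) - exp (-t * r ^ b)| ^ 2 * (1 + r ^ 2) ^ (-s)
      ≤ ((b - a) * ((T + ε⁻¹) * (1 + r ^ 2) ^ (ε / 2))) ^ 2 * (1 + r ^ 2) ^ (-s) := by
        gcongr
    _ = (b - a) ^ 2 * (T + ε⁻¹) ^ 2 * (1 + r ^ 2) ^ (ε - s) := by
        rw [← hweight]; ring

end Real

lemma integral_rpow_neg_one_add_norm_sq_pos {F : Type*} [NormedAddCommGroup F]
    [InnerProductSpace ℝ F] [FiniteDimensional ℝ F] [MeasurableSpace F] [BorelSpace F]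
    (μ : Measure F) [μ.IsAddHaarMeasure] {r : ℝ} (hr : (Module.finrank ℝ F : ℝ) < r) :
    0 < ∫ x, ((1 : ℝ) + ‖x‖ ^ 2) ^ (-r / 2) ∂μ := by
  rw [integral_pos_iff_support_of_nonneg (fun x ↦ by positivity)
    (integrable_rpow_neg_one_add_norm_sq hr)]
  have hsupp : Function.support (fun x : F ↦ ((1 : ℝ) + ‖x‖ ^ 2) ^ (-r / 2)) = univ :=
    Function.support_eq_univ fun x ↦ (rpow_pos_of_pos (by positivity) _).ne'
  simp [hsupp, NeZero.ne μ]

theorem stmt2 (n : ℕ) (s T : ℝ) (hs : (n : ℝ) / 2 < s) (hT : 0 < T) :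
    ∃ C > 0, ∀ α : ℝ, 1 < α → α < 2 → ∀ t ∈ Set.Icc (0:ℝ) T,
      (∫ ξ : E n, |Real.exp (-t * ‖ξ‖ ^ α) - Real.exp (-t * ‖ξ‖ ^ (2:ℝ))| ^ 2 *
          (1 + ‖ξ‖ ^ 2) ^ (-s)) ≤ C ^ 2 * (2 - α) ^ 2 := by
  set ε := (s - n / 2) / 2
  have hε : 0 < ε := by simp only [ε]; linarith
  have hdim : (Module.finrank ℝ (E n) : ℝ) < s + n / 2 := by simp; linarith
  have hweight : ε - s = -(s + n / 2) / 2 := by ring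
  set I := ∫ ξ : E n, (1 + ‖ξ‖ ^ 2) ^ (ε - s)
  have hI : Integrable fun ξ : E n ↦ (1 + ‖ξ‖ ^ 2) ^ (ε - s) :=
    hweight ▸ integrable_rpow_neg_one_add_norm_sq hdim
  have hI_pos : 0 < I := by
    simpa only [I, hweight] using integral_rpow_neg_one_add_norm_sq_pos volume hdim
  refine ⟨(T + ε⁻¹) * √I, by positivity, fun α hα1 hα2 t ht ↦ ?_⟩
  calc _ ≤ ∫ ξ : E n, (2 - α) ^ 2 * (T + ε⁻¹) ^ 2 * (1 + ‖ξ‖ ^ 2) ^ (ε - s) :=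
        integral_mono_of_nonneg (.of_forall fun ξ ↦ by positivity) (hI.const_mul _)
          (.of_forall fun ξ ↦ sq_abs_exp_neg_mul_rpow_sub_mul_le ht.1 ht.2 (norm_nonneg ξ)
            hα1.le hα2.le hε)
    _ = ((T + ε⁻¹) * √I) ^ 2 * (2 - α) ^ 2 := by
        rw [integral_const_mul, mul_pow, sq_sqrt hI_pos.le]; ring
end
end

section
/- Let s₁, s₂ ≥ 0 and ε > 0. There exists a constant C = C(n, s₂, ε) such that for every 1 < α < 2, every t₁, t₂ > ε, and every φ ∈ Ḣ^{s₁}(ℝⁿ): ‖p_α(t₁,·)*φ − p_α(t₂,·)*φ‖_{Ḣ^{s₁+s₂}} ≤ C·|t₁ − t₂|^{1/2}·‖φ‖_{Ḣ^{s₁}}. -/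
open MeasureTheory Real ENNReal Filter Set
noncomputable section

/-!
On the Fourier side the claim is a pointwise bound on the multiplier: with `x = |ξ|^α`,
`|e^{-t₁x} - e^{-t₂x}|² ≤ e^{-2εx} · |t₁ - t₂| x`, since `(1 - e^{-u})² ≤ min 1 u ≤ u`.
The extra weight `|ξ|^{2s₂}` is at most `1 + x^{2s₂}` because `α ≥ 1`, and
`x^p e^{-2εx}` is bounded uniformly in `x ≥ 0`, so the constant depends only on `s₂` and `ε`.
-/

lemma one_sub_exp_neg_sq_le {u : ℝ} (hu : 0 ≤ u) : (1 - exp (-u)) ^ 2 ≤ u := by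
  have h_le_one : exp (-u) ≤ 1 := exp_le_one_iff.2 (by linarith)
  have h_le_u : 1 - exp (-u) ≤ u := by linarith [add_one_le_exp (-u)]
  nlinarith [exp_pos (-u)]

lemma sq_abs_exp_neg_mul_sub_exp_neg_mul_le {ε t₁ t₂ x : ℝ} (hx : 0 ≤ x)
    (ht₁ : ε ≤ t₁) (ht₂ : ε ≤ t₂) :
    |exp (-t₁ * x) - exp (-t₂ * x)| ^ 2 ≤ |t₁ - t₂| * (x * exp (-(2 * ε) * x)) := by
  wlog h : t₁ ≤ t₂ generalizing t₁ t₂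
  · rw [abs_sub_comm (exp _), abs_sub_comm t₁]
    exact this ht₂ ht₁ (le_of_not_ge h)
  have h_factor :
      exp (-t₁ * x) - exp (-t₂ * x) = exp (-t₁ * x) * (1 - exp (-((t₂ - t₁) * x))) := by
    rw [mul_sub, mul_one, ← exp_add]; ring_nf
  have h_decay : exp (-t₁ * x) ^ 2 ≤ exp (-(2 * ε) * x) := by
    rw [← exp_nat_mul, exp_le_exp]; push_cast; nlinarith
  calc |exp (-t₁ * x) - exp (-t₂ * x)| ^ 2
      = exp (-t₁ * x) ^ 2 * (1 - exp (-((t₂ - t₁) * x))) ^ 2 := by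
        rw [sq_abs, h_factor, mul_pow]
    _ ≤ exp (-(2 * ε) * x) * ((t₂ - t₁) * x) :=
        mul_le_mul h_decay (one_sub_exp_neg_sq_le (by nlinarith)) (sq_nonneg _) (exp_nonneg _)
    _ = |t₁ - t₂| * (x * exp (-(2 * ε) * x)) := by
        rw [abs_sub_comm, abs_of_nonneg (sub_nonneg.2 h)]; ring

/-- The supremum of `x ^ p * exp (-c * x)` over `x ≥ 0`, attained at `x = p / c`. -/
def rpowExpSup (p c : ℝ) : ℝ := (p / c) ^ p * exp (-p)

lemma rpowExpSup_nonneg {p c : ℝ} (hp : 0 ≤ p) (hc : 0 < c) : 0 ≤ rpowExpSup p c :=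
  mul_nonneg (rpow_nonneg (div_nonneg hp hc.le) p) (exp_nonneg _)

lemma rpowExpSup_pos {p c : ℝ} (hp : 0 < p) (hc : 0 < c) : 0 < rpowExpSup p c :=
  mul_pos (rpow_pos_of_pos (div_pos hp hc) p) (exp_pos _)

lemma rpow_mul_exp_neg_mul_le_rpowExpSup {p c x : ℝ} (hp : 0 ≤ p) (hc : 0 < c) (hx : 0 ≤ x) :
    x ^ p * exp (-c * x) ≤ rpowExpSup p c := by
  rcases hp.eq_or_lt with rfl | hp
  · simpa [rpowExpSup] using exp_le_one_iff.2 (by nlinarith : -c * x ≤ 0)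
  -- `y ≤ exp (y - 1)` at `y = c x / p`, raised to the power `p`
  have h_base : x ≤ p / c * exp (c * x / p - 1) := by
    calc x = p / c * (c * x / p) := by field_simp
      _ ≤ p / c * exp (c * x / p - 1) :=
        mul_le_mul_of_nonneg_left (by linarith [add_one_le_exp (c * x / p - 1)]) (by positivity)
  have h_pow : x ^ p ≤ (p / c) ^ p * exp (c * x - p) := by
    calc x ^ p ≤ (p / c * exp (c * x / p - 1)) ^ p := rpow_le_rpow hx h_base hp.le
      _ = (p / c) ^ p * exp (c * x - p) := by
        rw [mul_rpow (div_nonneg hp.le hc.le) (exp_nonneg _), ← exp_mul]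
        congr 2; field_simp
  calc x ^ p * exp (-c * x) ≤ (p / c) ^ p * exp (c * x - p) * exp (-c * x) :=
        mul_le_mul_of_nonneg_right h_pow (exp_nonneg _)
    _ = rpowExpSup p c := by
        rw [rpowExpSup, mul_assoc, ← exp_add]; ring_nf

lemma rpow_le_one_add_rpow_rpow {r α s : ℝ} (hr : 0 ≤ r) (hα : 1 ≤ α) (hs : 0 ≤ s) :
    r ^ s ≤ 1 + (r ^ α) ^ s := by
  rcases le_total r 1 with hr₁ | hr₁
  · linarith [rpow_le_one hr hr₁ hs, rpow_nonneg (rpow_nonneg hr α) s]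
  · calc r ^ s ≤ r ^ (α * s) := rpow_le_rpow_of_exponent_le hr₁ (by nlinarith)
      _ = (r ^ α) ^ s := rpow_mul hr α s
      _ ≤ 1 + (r ^ α) ^ s := le_add_of_nonneg_left zero_le_one

lemma rpow_mul_sq_abs_exp_sub_exp_le {s ε α t₁ t₂ r : ℝ} (hs : 0 ≤ s) (hε : 0 < ε)
    (hα : 1 ≤ α) (ht₁ : ε ≤ t₁) (ht₂ : ε ≤ t₂) (hr : 0 ≤ r) :
    r ^ s * |exp (-t₁ * r ^ α) - exp (-t₂ * r ^ α)| ^ 2 ≤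
      (rpowExpSup 1 (2 * ε) + rpowExpSup (s + 1) (2 * ε)) * |t₁ - t₂| := by
  set x := r ^ α
  have hx : 0 ≤ x := rpow_nonneg hr α
  have h2ε : 0 < 2 * ε := by positivity
  calc r ^ s * |exp (-t₁ * x) - exp (-t₂ * x)| ^ 2
      ≤ (1 + x ^ s) * (|t₁ - t₂| * (x * exp (-(2 * ε) * x))) :=
        mul_le_mul (rpow_le_one_add_rpow_rpow hr hα hs)
          (sq_abs_exp_neg_mul_sub_exp_neg_mul_le hx ht₁ ht₂) (sq_nonneg _) (by positivity)
    _ = (x ^ (1 : ℝ) * exp (-(2 * ε) * x) + x ^ (s + 1) * exp (-(2 * ε) * x)) * |t₁ - t₂| := by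
        rw [Real.rpow_one, rpow_add_one' hx (by linarith)]; ring
    _ ≤ (rpowExpSup 1 (2 * ε) + rpowExpSup (s + 1) (2 * ε)) * |t₁ - t₂| :=
        mul_le_mul_of_nonneg_right
          (add_le_add (rpow_mul_exp_neg_mul_le_rpowExpSup zero_le_one h2ε hx)
            (rpow_mul_exp_neg_mul_le_rpowExpSup (by linarith) h2ε hx)) (abs_nonneg _)

lemma lintegral_ofReal_le_ofReal_mul_lintegral {X : Type*} [MeasurableSpace X] {μ : Measure X}
    {f g : X → ℝ} {K : ℝ} (hK : 0 ≤ K) (hfg : ∀ x, f x ≤ K * g x) :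
    ∫⁻ x, ENNReal.ofReal (f x) ∂μ ≤ ENNReal.ofReal K * ∫⁻ x, ENNReal.ofReal (g x) ∂μ :=
  calc ∫⁻ x, ENNReal.ofReal (f x) ∂μ ≤ ∫⁻ x, ENNReal.ofReal K * ENNReal.ofReal (g x) ∂μ :=
        lintegral_mono fun x ↦ (ENNReal.ofReal_le_ofReal (hfg x)).trans_eq (ENNReal.ofReal_mul hK)
    _ = ENNReal.ofReal K * ∫⁻ x, ENNReal.ofReal (g x) ∂μ :=
        lintegral_const_mul' _ _ ENNReal.ofReal_ne_top

theorem stmt5_general (n : ℕ) (s₁ s₂ ε : ℝ) (hs₂ : 0 ≤ s₂) (hε : 0 < ε) :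
    ∃ C > 0, ∀ α : ℝ, 1 < α → α < 2 → ∀ t₁ t₂ : ℝ, ε < t₁ → ε < t₂ → ∀ φhat : E n → ℂ,
      (∫⁻ ξ : E n, ENNReal.ofReal
          (‖ξ‖ ^ (2 * (s₁ + s₂)) *
            |Real.exp (-t₁ * ‖ξ‖ ^ α) - Real.exp (-t₂ * ‖ξ‖ ^ α)| ^ 2 * ‖φhat ξ‖ ^ 2)) ≤
        ENNReal.ofReal (C ^ 2 * |t₁ - t₂|) *
          ∫⁻ ξ : E n, ENNReal.ofReal (‖ξ‖ ^ (2 * s₁) * ‖φhat ξ‖ ^ 2) := by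
  set M := rpowExpSup 1 (2 * ε) + rpowExpSup (2 * s₂ + 1) (2 * ε)
  have hM : 0 < M := add_pos_of_pos_of_nonneg (rpowExpSup_pos one_pos (by positivity))
    (rpowExpSup_nonneg (by positivity) (by positivity))
  refine ⟨√M, sqrt_pos.2 hM, fun α hα₁ _ t₁ t₂ ht₁ ht₂ φhat ↦ ?_⟩
  rw [sq_sqrt hM.le]
  refine lintegral_ofReal_le_ofReal_mul_lintegral (by positivity) fun ξ ↦ ?_
  rcases (norm_nonneg ξ).eq_or_lt with hξ | hξ
  · simp only [← hξ, zero_rpow (by linarith : α ≠ 0), mul_zero, exp_zero, sub_self, abs_zero,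
      ne_eq, OfNat.ofNat_ne_zero, not_false_eq_true, zero_pow, zero_mul]
    positivity
  · rw [mul_add, rpow_add hξ]
    calc ‖ξ‖ ^ (2 * s₁) * ‖ξ‖ ^ (2 * s₂) *
          |exp (-t₁ * ‖ξ‖ ^ α) - exp (-t₂ * ‖ξ‖ ^ α)| ^ 2 * ‖φhat ξ‖ ^ 2
        = (‖ξ‖ ^ (2 * s₂) * |exp (-t₁ * ‖ξ‖ ^ α) - exp (-t₂ * ‖ξ‖ ^ α)| ^ 2) *
            (‖ξ‖ ^ (2 * s₁) * ‖φhat ξ‖ ^ 2) := by ring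
      _ ≤ M * |t₁ - t₂| * (‖ξ‖ ^ (2 * s₁) * ‖φhat ξ‖ ^ 2) :=
        mul_le_mul_of_nonneg_right (rpow_mul_sq_abs_exp_sub_exp_le (by positivity) hε hα₁.le
          ht₁.le ht₂.le hξ.le) (by positivity)

theorem stmt5 (n : ℕ) (s₁ s₂ ε : ℝ) (hs₁ : 0 ≤ s₁) (hs₂ : 0 ≤ s₂) (hε : 0 < ε) :
    ∃ C > 0, ∀ α : ℝ, 1 < α → α < 2 → ∀ t₁ t₂ : ℝ, ε < t₁ → ε < t₂ → ∀ φhat : E n → ℂ,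
      (∫⁻ ξ : E n, ENNReal.ofReal
          (‖ξ‖ ^ (2 * (s₁ + s₂)) *
            |Real.exp (-t₁ * ‖ξ‖ ^ α) - Real.exp (-t₂ * ‖ξ‖ ^ α)| ^ 2 * ‖φhat ξ‖ ^ 2)) ≤
        ENNReal.ofReal (C ^ 2 * |t₁ - t₂|) *
          ∫⁻ ξ : E n, ENNReal.ofReal (‖ξ‖ ^ (2 * s₁) * ‖φhat ξ‖ ^ 2) :=
  stmt5_general n s₁ s₂ ε hs₂ hε
end
end
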